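/- arXiv:2003.09196 — 10 statements merged into one kernel-verified Lean document; each statement's English description precedes it below -/
import Mathlib

section
/- Let β, r > 0 and let S ⊆ ℍ satisfy C(β,r) ∩ p⁻¹S = ∅ for all p ∈ S. Then for each o ∈ S, the set S' := S ∩ o·{(x,y,z) : |x| < r/2} has the β-full cone property in the strong sense that C(β) ∩ p⁻¹S' = ∅ for all p ∈ S'. -/
open Set

noncomputable section

/-- The first Heisenberg group as ℝ³. -/
abbrev H : Type := ℝ × ℝ × ℝ

/-- Heisenberg group multiplication. -/
def Hmul (p q : H) : H :=
  (p.1 + q.1, p.2.1 + q.2.1, p.2.2 + q.2.2 + (p.1 * q.2.1 - q.1 * p.2.1) / 2)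

/-- Heisenberg group inverse. -/
def Hinv (p : H) : H := (-p.1, -p.2.1, -p.2.2)

/-- Left translation of a set: `pE = {pe : e ∈ E}`. -/
def LTrans (p : H) (E : Set H) : Set H := Hmul p '' E

/-- The α-flat cone `fC(α) = {(x,y,0) : |y| < α|x|}`. -/
def fC (α : ℝ) : Set H := {p | |p.2.1| < α * |p.1| ∧ p.2.2 = 0}

/-- The α-full cone `C(α) = {(x,y,z) : |y| < α|x|, |z| < αx²/2}`. -/
def fullC (α : ℝ) : Set H := {p | |p.2.1| < α * |p.1| ∧ |p.2.2| < α * p.1 ^ 2 / 2}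

/-- The truncated full cone `C(β,r)`. -/
def truncC (β r : ℝ) : Set H :=
  {p | |p.2.1| < β * |p.1| ∧ |p.2.2| < β * p.1 ^ 2 / 2 ∧ |p.1| < r}

/-- The vertical set `vC(β,r) = {(x,0,ux²/2) : |u| < β, |x| < r}`. -/
def vC (β r : ℝ) : Set H :=
  {p | ∃ u x : ℝ, |u| < β ∧ |x| < r ∧ p = (x, 0, u * x ^ 2 / 2)}

/-- The shear map `M_t(x,y,z) = (x, y + tx, z)`. -/
def Mmap (t : ℝ) (p : H) : H := (p.1, p.2.1 + t * p.1, p.2.2)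

/-- The projection `π(x,y,z) = (y, z + xy/2)`. -/
def proj (p : H) : ℝ × ℝ := (p.2.1, p.2.2 + p.1 * p.2.1 / 2)

/-- The intrinsic graph of `φ` over `Ω`. -/
def IGraph (Ω : Set (ℝ × ℝ)) (φ : ℝ × ℝ → ℝ) : Set H :=
  (fun w => (φ w, w.1, w.2 - w.1 * φ w / 2)) '' Ω

/-- The α-flat cone property. -/
def FlatConeProp (α : ℝ) (S : Set H) : Prop :=
  ∀ p ∈ S, fC α ∩ LTrans (Hinv p) S = ∅

/-- A topological surface: every point of `S` has an open neighborhood in `S`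
homeomorphic to `ℝ²`. -/
def IsTopSurface (S : Set H) : Prop :=
  ∀ p : S, ∃ U : Set S, IsOpen U ∧ p ∈ U ∧ Nonempty (U ≃ₜ (ℝ × ℝ))

/-- Dilations `δ_λ(x,y,z) = (λx, λy, λ²z)`. -/
def dil (l : ℝ) (p : H) : H := (l * p.1, l * p.2.1, l ^ 2 * p.2.2)

/-- A cone is a set invariant under all dilations. -/
def IsCone (E : Set H) : Prop := ∀ l : ℝ, 0 < l → dil l '' E = E

/-- Rotation around the z-axis by angle θ. -/
def Rot (θ : ℝ) (p : H) : H :=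
  (p.1 * Real.cos θ - p.2.1 * Real.sin θ, p.1 * Real.sin θ + p.2.1 * Real.cos θ, p.2.2)

theorem stmt3 (β r : ℝ) (hβ : 0 < β) (hr : 0 < r) (S : Set H)
    (h : ∀ p ∈ S, truncC β r ∩ LTrans (Hinv p) S = ∅) (o : H) (ho : o ∈ S) :
    ∀ p ∈ S ∩ LTrans o {q : H | |q.1| < r / 2},
      fullC β ∩ LTrans (Hinv p) (S ∩ LTrans o {q : H | |q.1| < r / 2}) = ∅ := by
  rintro p ⟨hpS, qp, hqp, rfl⟩
  rw [Set.eq_empty_iff_forall_notMem]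
  rintro w ⟨hwC, s, ⟨hsS, qs, hqs, rfl⟩, rfl⟩
  have hx : |(Hmul (Hinv (Hmul o qp)) (Hmul o qs)).1| < r := by
    simp only [Hmul, Hinv]
    have : -(o.1 + qp.1) + (o.1 + qs.1) = qs.1 - qp.1 := by ring
    rw [this]
    calc |qs.1 - qp.1| ≤ |qs.1| + |qp.1| := abs_sub _ _
      _ < r / 2 + r / 2 := add_lt_add hqs hqp
      _ = r := by ring
  have := h (Hmul o qp) hpS
  rw [Set.eq_empty_iff_forall_notMem] at this
  exact this _ ⟨⟨hwC.1, hwC.2, hx⟩, Hmul o qs, hsS, rfl⟩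
end
end

section
/- Let α > 0 and let S ⊆ ℍ be a topological surface with the α-flat cone property. Then π(S) is an open subset of ℝ² and there exists a continuous function φ : π(S) → ℝ such that S = Γ_φ; that is, S is the intrinsic graph of a continuous function defined on an open subset of ℝ². -/
open Set

noncomputable section

/-!
If `p, q ∈ S` have the same projection then `p⁻¹q = (x, 0, 0)`, which lies in the flat cone unless
`x = 0`; so `π` is injective on `S`. By invariance of domain in the plane,
`π` maps each chart of `S` homeomorphically onto an open subset of `ℝ²`. Hence `π(S)` is open and
the inverse of `π|S`, whose first coordinate is `φ`, is continuous.

Invariance of domain is proved with continuous logarithms, i.e. lifts through the covering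
`exp : ℂ → ℂ ∖ {0}`. If `f(B̄(c, r))` missed a point `q` close to `f c`, then shrinking the boundary
circle inside the disc would give a logarithm of `f(c + rz) - q`, hence of the nearby
`f(c + rz) - f c`, and Borsuk's homotopy `f(c + rz) - f(c - srz)` would carry it to the odd map
`f(c + rz) - f(c - rz)`, which has none.
-/

open Topology unitInterval

def HasContinuousLog {A : Type*} [TopologicalSpace A] (g : A → ℂ) : Prop :=
  ∃ L : A → ℂ, Continuous L ∧ ∀ a, Complex.exp (L a) = g a

section ContinuousLog

open Complex

variable {A : Type*} [TopologicalSpace A]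

theorem hasContinuousLog_const {c : ℂ} (hc : c ≠ 0) : HasContinuousLog fun _ : A => c :=
  ⟨fun _ => log c, continuous_const, fun _ => exp_log hc⟩

theorem HasContinuousLog.of_norm_sub_lt {g h : A → ℂ} (hg : HasContinuousLog g)
    (hh : Continuous h) (hclose : ∀ a, ‖g a - h a‖ < ‖h a‖) : HasContinuousLog h := by
  obtain ⟨L, hL, hexp⟩ := hg
  have hne : ∀ a, h a ≠ 0 := fun a h0 => by
    simpa [h0] using (norm_nonneg _).trans_lt (hclose a)
  have hslit : ∀ a, g a / h a ∈ slitPlane := fun a => by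
    rw [← add_sub_cancel 1 (g a / h a)]
    apply mem_slitPlane_of_norm_lt_one
    rw [div_sub_one (hne a), norm_div, div_lt_one (norm_pos_iff.mpr (hne a))]
    exact hclose a
  have hratio : Continuous fun a => g a / h a :=
    ((continuous_exp.comp hL).congr hexp).div hh hne
  refine ⟨fun a => L a - log (g a / h a), ?_, fun a => ?_⟩
  · exact hL.sub (continuous_iff_continuousAt.mpr fun a => hratio.continuousAt.clog (hslit a))
  · have hg0 : g a ≠ 0 := hexp a ▸ exp_ne_zero _
    rw [exp_sub, exp_log (div_ne_zero hg0 (hne a)), hexp, div_div_cancel₀ hg0]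

theorem hasContinuousLog_of_homotopy {F : I × A → ℂ} (hF : Continuous F) (hne : ∀ x, F x ≠ 0)
    (h₀ : HasContinuousLog fun a => F (0, a)) : HasContinuousLog fun a => F (1, a) := by
  obtain ⟨L, hL, hexp⟩ := h₀
  let F' : C(I × A, {z : ℂ // z ≠ 0}) := ⟨fun x => ⟨F x, hne x⟩, by fun_prop⟩
  let lift := isCoveringMap_exp.liftHomotopy F' ⟨L, hL⟩ fun a => Subtype.ext (hexp a).symm
  refine ⟨fun a => lift (1, a), by fun_prop, fun a => ?_⟩
  exact congrArg Subtype.val (congrFun (isCoveringMap_exp.liftHomotopy_lifts _ _ _) (1, a))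

theorem not_hasContinuousLog_of_odd [PreconnectedSpace A] [Nonempty A] [InvolutiveNeg A]
    [ContinuousNeg A] {g : A → ℂ} (hodd : ∀ a, g (-a) = -g a) : ¬HasContinuousLog g := by
  rintro ⟨L, hL, hexp⟩
  set D : A → ℂ := fun a => L (-a) - L a
  have hD : ∀ a, exp (D a) = -1 := fun a => by
    have hg0 : g a ≠ 0 := hexp a ▸ exp_ne_zero _
    rw [exp_sub, hexp, hexp, hodd, neg_div, div_self hg0]
  have hconst : ∀ a a', D a = D a' :=
    isCoveringMap_exp.const_of_comp (by fun_prop) fun a a' =>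
      Subtype.ext (show exp (D a) = exp (D a') by rw [hD, hD])
  obtain ⟨a⟩ := ‹Nonempty A›
  have hzero : D a = 0 := by
    have hodd_D : D (-a) = -D a := by simp only [D, neg_neg, neg_sub]
    linear_combination (hconst a (-a) + hodd_D) / 2
  have h := hD a
  rw [hzero, exp_zero] at h
  norm_num at h

end ContinuousLog

open Metric Function in
theorem Complex.mem_interior_image_closedBall_of_injective {f : ℂ → ℂ} (hf : Continuous f)
    (hinj : Injective f) (c : ℂ) {r : ℝ} (hr : 0 < r) :
    f c ∈ interior (f '' closedBall c r) := by
  have hsphere : ∀ z : Circle, c + r * z ∈ sphere c r := fun z => by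
    simp [Circle.norm_coe, abs_of_pos hr]
  have hnorm : ∀ (s : I) (z : Circle), ‖(s : ℂ) * r * z‖ ≤ r := fun s z => by
    simpa [Circle.norm_coe, abs_of_pos hr, abs_of_nonneg s.2.1] using
      mul_le_of_le_one_left hr.le s.2.2
  set K := f '' sphere c r
  have hcK : f c ∉ K := by
    rintro ⟨z, hz, hfz⟩
    simp [hinj hfz, hr.ne] at hz
  have hd : 0 < infDist (f c) K :=
    ((isCompact_sphere c r).image hf).isClosed.notMem_iff_infDist_pos
      ⟨_, _, hsphere 1, rfl⟩ |>.mp hcK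
  refine mem_interior.mpr ⟨ball (f c) (infDist (f c) K), fun q hq => ?_, isOpen_ball,
    mem_ball_self hd⟩
  by_contra hq'
  have hlog_q : HasContinuousLog fun z : Circle => f (c + r * z) - q := by
    have := hasContinuousLog_of_homotopy (A := Circle) (F := fun x => f (c + x.1 * r * x.2) - q)
      (by fun_prop) (fun x h0 => hq' ⟨_, ?_, sub_eq_zero.mp h0⟩) ?_
    · simpa using this
    · simpa [dist_eq_norm] using hnorm x.1 x.2
    · simpa using hasContinuousLog_const
        (sub_ne_zero.mpr fun h => hq' ⟨c, mem_closedBall_self hr.le, h⟩)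
  have hlog_c : HasContinuousLog fun z : Circle => f (c + r * z) - f c := by
    refine hlog_q.of_norm_sub_lt (by fun_prop) fun z => ?_
    rw [sub_sub_sub_cancel_left, ← dist_eq_norm', ← dist_eq_norm']
    exact (mem_ball.mp hq).trans_le (infDist_le_dist_of_mem ⟨_, hsphere z, rfl⟩)
  have hlog_odd : HasContinuousLog fun z : Circle => f (c + r * z) - f (c + r * ↑(-z)) := by
    have := hasContinuousLog_of_homotopy (A := Circle)
      (F := fun x => f (c + r * x.2) - f (c - x.1 * r * x.2)) (by fun_prop) (fun x h0 => ?_) ?_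
    · simpa [sub_eq_add_neg] using this
    · have h := hinj (sub_eq_zero.mp h0)
      have h' : ((1 + x.1 : ℝ) : ℂ) * r * x.2 = 0 := by push_cast; linear_combination h
      simp [hr.ne', Circle.coe_ne_zero] at h'
      have h'' : (1 + x.1 : ℝ) = 0 := by exact_mod_cast h'
      linarith [x.1.2.1]
    · simpa using hlog_c
  exact not_hasContinuousLog_of_odd (fun z => by simp only [neg_neg, neg_sub]) hlog_odd

theorem Complex.isOpenMap_of_injective {f : ℂ → ℂ} (hf : Continuous f)
    (hinj : Function.Injective f) : IsOpenMap f := by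
  intro U hU
  rw [isOpen_iff_mem_nhds]
  rintro _ ⟨c, hc, rfl⟩
  obtain ⟨ε, hε, hball⟩ := Metric.isOpen_iff.mp hU c hc
  rw [← mem_interior_iff_mem_nhds]
  refine interior_mono (image_mono ?_) (mem_interior_image_closedBall_of_injective hf hinj c
    (half_pos hε))
  exact (Metric.closedBall_subset_ball (half_lt_self hε)).trans hball

theorem isOpenEmbedding_realProd_of_continuous_injective {g : ℝ × ℝ → ℝ × ℝ}
    (hg : Continuous g) (hinj : Function.Injective g) : IsOpenEmbedding g := by
  let e : ℂ ≃ₜ ℝ × ℝ := Complex.equivRealProdCLM.toHomeomorph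
  have hconj : IsOpenMap (e.symm ∘ g ∘ e) :=
    Complex.isOpenMap_of_injective (by fun_prop) (e.symm.injective.comp (hinj.comp e.injective))
  refine .of_continuous_injective_isOpenMap hg hinj ?_
  simpa [Function.comp_def] using e.isOpenMap.comp (hconj.comp e.symm.isOpenMap)

section TopSurface

variable {S : Set H} {g : H → ℝ × ℝ}

theorem IsTopSurface.exists_isOpenEmbedding_comp (hS : IsTopSurface S) (hg : Continuous g)
    (hinj : InjOn g S) {p : H} (hp : p ∈ S) :
    ∃ ψ : ℝ × ℝ → H, Continuous ψ ∧ IsOpenEmbedding (g ∘ ψ) ∧ range ψ ⊆ S ∧ p ∈ range ψ := by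
  obtain ⟨U, -, hpU, ⟨e⟩⟩ := hS ⟨p, hp⟩
  let ψ : ℝ × ℝ → H := fun v => e.symm v
  have hψS : range ψ ⊆ S := range_subset_iff.mpr fun v => (e.symm v : S).2
  have hψinj : Function.Injective ψ := fun v w h =>
    e.symm.injective (Subtype.val_injective (Subtype.val_injective h))
  refine ⟨ψ, by fun_prop, ?_, hψS, e ⟨⟨p, hp⟩, hpU⟩, by simp [ψ]⟩
  refine isOpenEmbedding_realProd_of_continuous_injective (hg.comp (by fun_prop)) ?_
  exact fun v w h => hψinj (hinj (hψS ⟨v, rfl⟩) (hψS ⟨w, rfl⟩) h)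

theorem IsTopSurface.isOpen_image (hS : IsTopSurface S) (hg : Continuous g) (hinj : InjOn g S) :
    IsOpen (g '' S) := by
  refine isOpen_iff_forall_mem_open.mpr ?_
  rintro _ ⟨p, hp, rfl⟩
  obtain ⟨ψ, -, hψ, hψS, v, rfl⟩ := hS.exists_isOpenEmbedding_comp hg hinj hp
  exact ⟨_, range_comp g ψ ▸ image_mono hψS, hψ.isOpen_range, v, rfl⟩

theorem IsTopSurface.continuousOn_invFunOn (hS : IsTopSurface S) (hg : Continuous g)
    (hinj : InjOn g S) : ContinuousOn (Function.invFunOn g S) (g '' S) := by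
  rintro _ ⟨p, hp, rfl⟩
  obtain ⟨ψ, hψc, hψ, hψS, v, rfl⟩ := hS.exists_isOpenEmbedding_comp hg hinj hp
  refine (hψ.continuousAt_iff.mp ?_).continuousWithinAt
  have hψ_inv : Function.invFunOn g S ∘ g ∘ ψ = ψ :=
    funext fun w => hinj.leftInvOn_invFunOn (hψS ⟨w, rfl⟩)
  rw [hψ_inv]
  exact hψc.continuousAt

end TopSurface

theorem FlatConeProp.injOn_proj {α : ℝ} {S : Set H} (hflat : FlatConeProp α S) (hα : 0 < α) :
    InjOn proj S := by
  intro p hp q hq hpq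
  obtain ⟨hy, hz⟩ := Prod.ext_iff.mp hpq
  simp only [proj] at hy hz
  by_contra hne
  have hx : q.1 - p.1 ≠ 0 := fun h => hne (Prod.ext (by linarith) (Prod.ext hy (by
    rw [show q.1 = p.1 by linarith, hy] at hz; linarith)))
  have hmem : Hmul (Hinv p) q ∈ fC α ∩ LTrans (Hinv p) S := by
    refine ⟨⟨?_, ?_⟩, q, hq, rfl⟩
    · simp only [Hmul, Hinv, hy, neg_add_cancel, abs_zero, neg_add_eq_sub]
      exact mul_pos hα (abs_pos.mpr hx)
    · simp only [Hmul, Hinv]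
      rw [← hy] at hz ⊢
      linarith
  rw [hflat p hp] at hmem
  exact hmem

theorem continuous_proj : Continuous proj := by
  unfold proj
  fun_prop

theorem eq_iGraph_proj_image {S : Set H} (hinj : InjOn proj S) :
    S = IGraph (proj '' S) fun w => (Function.invFunOn proj S w).1 := by
  have hgraph : ∀ p ∈ S, ((Function.invFunOn proj S (proj p)).1, (proj p).1,
      (proj p).2 - (proj p).1 * (Function.invFunOn proj S (proj p)).1 / 2) = p := by
    intro p hp
    rw [hinj.leftInvOn_invFunOn hp]
    ext <;> simp only [proj]; ring
  ext p
  constructor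
  · exact fun hp => ⟨proj p, mem_image_of_mem proj hp, hgraph p hp⟩
  · rintro ⟨_, ⟨q, hq, rfl⟩, rfl⟩
    dsimp only
    exact (hgraph q hq).symm ▸ hq

theorem stmt4 (α : ℝ) (hα : 0 < α) (S : Set H) (hS : IsTopSurface S)
    (hflat : FlatConeProp α S) :
    IsOpen (proj '' S) ∧ ∃ φ : ℝ × ℝ → ℝ, ContinuousOn φ (proj '' S) ∧
      S = IGraph (proj '' S) φ := by
  have hinj := hflat.injOn_proj hα
  exact ⟨hS.isOpen_image continuous_proj hinj, _,
    continuous_fst.comp_continuousOn (hS.continuousOn_invFunOn continuous_proj hinj),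
    eq_iGraph_proj_image hinj⟩
end
end

section
/- Let α > 0 and let S ⊆ ℍ have the α-flat cone property. Then the restriction of the projection π to S is injective. -/
open Set

noncomputable section

theorem stmt5 (α : ℝ) (hα : 0 < α) (S : Set H) (hflat : FlatConeProp α S) :
    Set.InjOn proj S := by
  intro p hp q hq hpq
  by_contra hne
  have hzero := hflat p hp
  simp only [proj, Prod.ext_iff] at hpq
  obtain ⟨h1, h2⟩ := hpq
  have hx : q.1 ≠ p.1 := by
    intro hx
    apply hne
    have h3 : p.2.2 = q.2.2 := by rw [← h1, hx] at h2; linarith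
    exact Prod.ext_iff.mpr ⟨hx.symm, Prod.ext_iff.mpr ⟨h1, h3⟩⟩
  have hmem : Hmul (Hinv p) q ∈ fC α ∩ LTrans (Hinv p) S := by
    constructor
    · constructor
      · show |(-p.2.1 + q.2.1 : ℝ)| < α * |(-p.1 + q.1 : ℝ)|
        rw [← h1]
        simp only [neg_add_cancel, abs_zero]
        have : (0:ℝ) < |(-p.1 + q.1)| := by
          rw [abs_pos]
          intro h
          exact hx (by linarith)
        positivity
      · show (-p.2.2 + q.2.2 + (-p.1 * q.2.1 - q.1 * -p.2.1) / 2 : ℝ) = 0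
        rw [← h1] at h2 ⊢
        ring_nf
        ring_nf at h2
        linarith
    · exact ⟨q, hq, rfl⟩
  rw [hzero] at hmem
  exact hmem
end
end

section
/- Fix η₀, τ₀, β > 0 and let ψ : [−η₀, η₀] × [−τ₀, τ₀] → ℝ be continuous with ψ(0,0) = 0, and suppose Γ_ψ has the β-flat cone property. Set ε := min{η₀, √(τ₀β)}. Then for every η ∈ [−ε, ε] there exists s ∈ [−β⁻¹, β⁻¹] such that (sη, η, 0) ∈ Γ_ψ. -/
open Set

noncomputable section

lemma key_bound (η₀ τ₀ β : ℝ) (hη : 0 < η₀) (hτ : 0 < τ₀) (hβ : 0 < β)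
    (ψ : ℝ × ℝ → ℝ) (hψ0 : ψ (0, 0) = 0)
    (hflat : FlatConeProp β (IGraph (Icc (-η₀) η₀ ×ˢ Icc (-τ₀) τ₀) ψ))
    (a τ : ℝ) (ha : |a| ≤ min η₀ (Real.sqrt (τ₀ * β)))
    (hτm : τ ∈ Icc (-τ₀) τ₀) (heq : τ = a * ψ (a, τ) / 2) :
    β * |ψ (a, τ)| ≤ |a| ∧ |τ| ≤ τ₀ / 2 := by
  have haabs : |a| ≤ η₀ := ha.trans (min_le_left _ _)
  have haη : a ∈ Icc (-η₀) η₀ := abs_le.mp haabs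
  have hp0 : ((0:ℝ), (0:ℝ), (0:ℝ)) ∈ IGraph (Icc (-η₀) η₀ ×ˢ Icc (-τ₀) τ₀) ψ := by
    have hψ0' : ψ 0 = 0 := hψ0
    refine ⟨(0, 0), ?_, ?_⟩
    · refine ⟨⟨?_, ?_⟩, ?_, ?_⟩ <;> simp <;> linarith
    · simp [hψ0, hψ0']
  have hq : ((ψ (a, τ), a, (0:ℝ)) : H) ∈ IGraph (Icc (-η₀) η₀ ×ˢ Icc (-τ₀) τ₀) ψ := by
    refine ⟨(a, τ), ⟨haη, hτm⟩, ?_⟩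
    simp only [Prod.mk.injEq]
    exact ⟨trivial, trivial, by linarith⟩
  have hmem : ((ψ (a, τ), a, (0:ℝ)) : H) ∈
      LTrans (Hinv ((0:ℝ), (0:ℝ), (0:ℝ))) (IGraph (Icc (-η₀) η₀ ×ˢ Icc (-τ₀) τ₀) ψ) := by
    refine ⟨(ψ (a, τ), a, (0:ℝ)), hq, ?_⟩
    simp [Hmul, Hinv]
  have hfc := hflat _ hp0
  have hnot : ¬ (|a| < β * |ψ (a, τ)|) := by
    intro hlt
    exact (eq_empty_iff_forall_notMem.mp hfc _) ⟨⟨hlt, rfl⟩, hmem⟩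
  have h1 : β * |ψ (a, τ)| ≤ |a| := not_lt.mp hnot
  refine ⟨h1, ?_⟩
  have hε0 : 0 ≤ min η₀ (Real.sqrt (τ₀ * β)) := le_min hη.le (Real.sqrt_nonneg _)
  have hsq : (min η₀ (Real.sqrt (τ₀ * β)))^2 ≤ τ₀ * β := by
    have h := min_le_right η₀ (Real.sqrt (τ₀ * β))
    nlinarith [Real.sq_sqrt (mul_nonneg hτ.le hβ.le), Real.sqrt_nonneg (τ₀ * β)]
  have hτabs : |τ| = |a| * |ψ (a, τ)| / 2 := by
    conv_lhs => rw [heq]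
    rw [abs_div, abs_mul]
    norm_num
  nlinarith [abs_nonneg a, abs_nonneg (ψ (a, τ)), abs_nonneg τ,
    mul_le_mul_of_nonneg_left h1 (abs_nonneg a),
    mul_le_mul_of_nonneg_left ha hε0, mul_le_mul_of_nonneg_right ha (abs_nonneg a)]

theorem stmt6 (η₀ τ₀ β : ℝ) (hη : 0 < η₀) (hτ : 0 < τ₀) (hβ : 0 < β)
    (ψ : ℝ × ℝ → ℝ)
    (hcont : ContinuousOn ψ (Icc (-η₀) η₀ ×ˢ Icc (-τ₀) τ₀))
    (hψ0 : ψ (0, 0) = 0)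
    (hflat : FlatConeProp β (IGraph (Icc (-η₀) η₀ ×ˢ Icc (-τ₀) τ₀) ψ)) :
    ∀ η ∈ Icc (-(min η₀ (Real.sqrt (τ₀ * β)))) (min η₀ (Real.sqrt (τ₀ * β))),
      ∃ s ∈ Icc (-β⁻¹) β⁻¹,
        ((s * η, η, (0:ℝ)) : H) ∈ IGraph (Icc (-η₀) η₀ ×ˢ Icc (-τ₀) τ₀) ψ := by
  intro η hηmem
  have hβi : (0:ℝ) ≤ β⁻¹ := by positivity
  by_cases hη0 : η = 0
  · subst hη0
    refine ⟨0, ⟨by linarith, hβi⟩, ?_⟩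
    have hψ0' : ψ 0 = 0 := hψ0
    refine ⟨(0, 0), ?_, ?_⟩
    · refine ⟨⟨?_, ?_⟩, ?_, ?_⟩ <;> simp <;> linarith
    · simp [hψ0, hψ0']
  · have hηabs : |η| ≤ min η₀ (Real.sqrt (τ₀ * β)) := abs_le.mpr ⟨hηmem.1, hηmem.2⟩
    have hηη₀ : |η| ≤ η₀ := hηabs.trans (min_le_left _ _)
    -- continuity of the auxiliary path maps
    have hmaps : ∀ t ∈ Icc (0:ℝ) 1, ∀ τ' ∈ Icc (-τ₀) τ₀,
        ((t * η, τ') : ℝ × ℝ) ∈ Icc (-η₀) η₀ ×ˢ Icc (-τ₀) τ₀ := by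
      intro t ht τ' hτ'
      refine ⟨abs_le.mp ?_, hτ'⟩
      rw [abs_mul]
      calc |t| * |η| ≤ 1 * |η| := by
            apply mul_le_mul_of_nonneg_right _ (abs_nonneg η)
            rw [abs_le]; exact ⟨by linarith [ht.1], ht.2⟩
        _ = |η| := one_mul _
        _ ≤ η₀ := hηη₀
    -- key: no zero of F at τ = ±τ₀ along the path
    have hnz : ∀ σ : ℝ, σ ∈ Icc (-τ₀) τ₀ → |σ| = τ₀ → ∀ t ∈ Icc (0:ℝ) 1,
        σ - t * η * ψ (t * η, σ) / 2 ≠ 0 := by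
      intro σ hσm hσabs t ht h0
      have hta : |t * η| ≤ min η₀ (Real.sqrt (τ₀ * β)) := by
        rw [abs_mul]
        calc |t| * |η| ≤ 1 * |η| := by
              apply mul_le_mul_of_nonneg_right _ (abs_nonneg η)
              rw [abs_le]; exact ⟨by linarith [ht.1], ht.2⟩
          _ = |η| := one_mul _
          _ ≤ _ := hηabs
      have := (key_bound η₀ τ₀ β hη hτ hβ ψ hψ0 hflat (t * η) σ hta hσm (by linarith)).2
      rw [hσabs] at this; linarith
    -- sign of F(η, σ) at σ = ±τ₀ by connectedness along the path
    have hpath : ∀ σ : ℝ, σ ∈ Icc (-τ₀) τ₀ → |σ| = τ₀ →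
        (0 < σ → 0 < σ - η * ψ (η, σ) / 2) ∧ (σ < 0 → σ - η * ψ (η, σ) / 2 < 0) := by
      intro σ hσm hσabs
      have hgc : ContinuousOn (fun t : ℝ => σ - t * η * ψ (t * η, σ) / 2) (Icc 0 1) := by
        apply ContinuousOn.sub continuousOn_const
        apply ContinuousOn.div_const
        apply ContinuousOn.mul
        · exact (continuous_id.mul continuous_const).continuousOn
        · apply hcont.comp
          · exact ((continuous_id.mul continuous_const).prodMk continuous_const).continuousOn
          · intro t ht
            exact hmaps t ht σ hσm
      constructor
      · intro hσpos
        by_contra hle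
        push_neg at hle
        have h0 : (0:ℝ) ∈ Icc (σ - 1 * η * ψ (1 * η, σ) / 2) (σ - 0 * η * ψ (0 * η, σ) / 2) := by
          constructor
          · simpa using hle
          · simp; linarith
        obtain ⟨t, ht, hteq⟩ := intermediate_value_Icc' (by norm_num : (0:ℝ) ≤ 1) hgc h0
        exact hnz σ hσm hσabs t ht hteq
      · intro hσneg
        by_contra hle
        push_neg at hle
        have h0 : (0:ℝ) ∈ Icc (σ - 0 * η * ψ (0 * η, σ) / 2) (σ - 1 * η * ψ (1 * η, σ) / 2) := by
          constructor
          · simp; linarith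
          · simpa using hle
        obtain ⟨t, ht, hteq⟩ := intermediate_value_Icc (by norm_num : (0:ℝ) ≤ 1) hgc h0
        exact hnz σ hσm hσabs t ht hteq
    have htop : 0 < τ₀ - η * ψ (η, τ₀) / 2 :=
      (hpath τ₀ ⟨by linarith, le_refl _⟩ (abs_of_pos hτ) ).1 hτ
    have hbot : -τ₀ - η * ψ (η, -τ₀) / 2 < 0 :=
      (hpath (-τ₀) ⟨le_refl _, by linarith⟩ (by rw [abs_neg, abs_of_pos hτ]) ).2 (by linarith)
    -- IVT in τ
    have hfc : ContinuousOn (fun τ : ℝ => τ - η * ψ (η, τ) / 2) (Icc (-τ₀) τ₀) := by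
      apply ContinuousOn.sub continuousOn_id
      apply ContinuousOn.div_const
      apply ContinuousOn.mul continuousOn_const
      apply hcont.comp
      · exact (continuous_const.prodMk continuous_id).continuousOn
      · intro τ' hτ'
        exact ⟨abs_le.mp hηη₀, hτ'⟩
    have h0 : (0:ℝ) ∈ Icc (-τ₀ - η * ψ (η, -τ₀) / 2) (τ₀ - η * ψ (η, τ₀) / 2) :=
      ⟨hbot.le, htop.le⟩
    obtain ⟨τ', hτ'm, hτ'eq⟩ := intermediate_value_Icc (by linarith : (-τ₀) ≤ τ₀) hfc h0
    have heq : τ' = η * ψ (η, τ') / 2 := by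
      simp only at hτ'eq; linarith
    have hkey := (key_bound η₀ τ₀ β hη hτ hβ ψ hψ0 hflat η τ' hηabs hτ'm heq).1
    refine ⟨ψ (η, τ') / η, ?_, ?_⟩
    · rw [mem_Icc, ← abs_le, abs_div, div_le_iff₀ (abs_pos.mpr hη0)]
      calc |ψ (η, τ')| ≤ |η| / β := by rw [le_div_iff₀ hβ, mul_comm]; exact hkey
        _ = β⁻¹ * |η| := (inv_mul_eq_div β |η|).symm
    · refine ⟨(η, τ'), ⟨abs_le.mp hηη₀, hτ'm⟩, ?_⟩
      simp only [Prod.mk.injEq]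
      refine ⟨by field_simp, trivial, by linarith⟩
end
end

section
/- Let α > 0 and let S ⊆ ℍ have the α-flat cone property. Then for every t ∈ ℝ with |t| ≤ α/2 and every p ∈ ℍ, the set M_t(p⁻¹S) has the (α/2)-flat cone property. -/
open Set

noncomputable section

theorem stmt8 (α : ℝ) (hα : 0 < α) (S : Set H) (hflat : FlatConeProp α S)
    (t : ℝ) (ht : |t| ≤ α / 2) (p : H) :
    FlatConeProp (α / 2) (Mmap t '' LTrans (Hinv p) S) := by
  intro q hq
  rw [eq_empty_iff_forall_notMem]
  rintro w ⟨hwC, hwT⟩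
  obtain ⟨q0, ⟨s0, hs0, rfl⟩, rfl⟩ := hq
  obtain ⟨w0, ⟨w1, ⟨s, hs, rfl⟩, rfl⟩, rfl⟩ := hwT
  have key := hflat s0 hs0
  rw [eq_empty_iff_forall_notMem] at key
  refine key (Hmul (Hinv s0) s) ⟨?_, ⟨s, hs, rfl⟩⟩
  obtain ⟨hy, hz⟩ := hwC
  simp only [Hmul, Hinv, Mmap, fC, Set.mem_setOf_eq] at hy hz ⊢
  set X := -s0.1 + s.1 with hX
  set Y := -s0.2.1 + s.2.1 with hY
  have e1 : -(-p.2.1 + s0.2.1 + t * (-p.1 + s0.1)) + (-p.2.1 + s.2.1 + t * (-p.1 + s.1)) = Y + t * X := by rw [hX, hY]; ring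
  have e2 : -(-p.1 + s0.1) + (-p.1 + s.1) = X := by rw [hX]; ring
  rw [e1, e2] at hy
  refine ⟨?_, by linarith⟩
  have h1 : |Y| ≤ |Y + t * X| + |t| * |X| := by
    calc |Y| = |(Y + t * X) + (-(t * X))| := by congr 1; ring
    _ ≤ |Y + t * X| + |(-(t * X))| := abs_add_le _ _
    _ = |Y + t * X| + |t| * |X| := by rw [abs_neg, abs_mul]
  have h2 : |t| * |X| ≤ α / 2 * |X| := mul_le_mul_of_nonneg_right ht (abs_nonneg X)
  linarith
end
end

section
/- Let C ⊆ ℍ be an open cone with −C = C and C ∩ {(x,y,z) : z = 0} ≠ ∅. Then there exist α > 0 and a rotation R of ℝ³ around the z-axis such that C(α) ⊆ R(C). -/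
open Set

noncomputable section

/-! Since `C` is open and invariant under dilations, a single horizontal point of `C` yields,
after a rotation, the point `(1,0,0)` together with a ball around it (an open cone containing
the origin is all of `ℍ`). Dilating that ball by `x > 0` sweeps out the part `x > 0` of a
full cone, and `-C = C` supplies the part `x < 0`.
A full cone has no point with `x = 0`, so this is all of it. -/

open Topology

lemma dil_dil (a b : ℝ) (p : H) : dil a (dil b p) = dil (a * b) p := by
  simp only [dil, Prod.mk.injEq]
  exact ⟨by ring, by ring, by ring⟩

lemma dil_one (p : H) : dil 1 p = p := by simp [dil]

lemma dil_injective {l : ℝ} (hl : l ≠ 0) : Function.Injective (dil l) := fun p q h => by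
  simpa only [dil_dil, inv_mul_cancel₀ hl, dil_one] using congrArg (dil l⁻¹) h

lemma isCone_iff {E : Set H} : IsCone E ↔ ∀ l : ℝ, 0 < l → ∀ p, dil l p ∈ E ↔ p ∈ E := by
  refine ⟨fun hE l hl p => ?_, fun hE l hl => ?_⟩
  · simpa only [hE l hl] using (dil_injective hl.ne').mem_set_image (s := E) (a := p)
  · ext p
    refine ⟨?_, fun hp => ⟨dil l⁻¹ p, (hE l⁻¹ (inv_pos.2 hl) p).2 hp, ?_⟩⟩
    · rintro ⟨q, hq, rfl⟩
      exact (hE l hl q).2 hq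
    · rw [dil_dil, mul_inv_cancel₀ hl.ne', dil_one]

lemma Rot_Rot (a b : ℝ) (p : H) : Rot a (Rot b p) = Rot (a + b) p := by
  simp only [Rot, Real.cos_add, Real.sin_add, Prod.mk.injEq]
  exact ⟨by ring, by ring, trivial⟩

lemma Rot_zero (p : H) : Rot 0 p = p := by simp [Rot]

lemma Rot_dil (θ l : ℝ) (p : H) : Rot θ (dil l p) = dil l (Rot θ p) := by
  simp only [Rot, dil, Prod.mk.injEq]
  exact ⟨by ring, by ring, trivial⟩

lemma Rot_neg (θ : ℝ) (p : H) : Rot θ (-p) = -Rot θ p := by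
  simp only [Rot, Prod.fst_neg, Prod.snd_neg, Prod.neg_mk, Prod.mk.injEq]
  exact ⟨by ring, by ring, trivial⟩

lemma continuous_Rot (θ : ℝ) : Continuous (Rot θ) := by
  unfold Rot; fun_prop

lemma mem_image_Rot_iff {θ : ℝ} {C : Set H} {p : H} : p ∈ Rot θ '' C ↔ Rot (-θ) p ∈ C := by
  constructor
  · rintro ⟨q, hq, rfl⟩
    rwa [Rot_Rot, neg_add_cancel, Rot_zero]
  · intro hp
    exact ⟨Rot (-θ) p, hp, by rw [Rot_Rot, add_neg_cancel, Rot_zero]⟩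

lemma IsCone.preimage_Rot {C : Set H} (hC : IsCone C) (θ : ℝ) : IsCone (Rot θ ⁻¹' C) :=
  isCone_iff.2 fun l hl p => by
    simp only [mem_preimage, Rot_dil, isCone_iff.1 hC l hl]

lemma exists_Rot_dil_eq (p : H) (hp : p.2.2 = 0) :
    ∃ θ r : ℝ, 0 ≤ r ∧ Rot θ (dil r (1, 0, 0)) = p := by
  obtain ⟨x, y, z⟩ := p
  subst hp
  set w : ℂ := ⟨x, y⟩
  refine ⟨Complex.arg w, ‖w‖, norm_nonneg w, ?_⟩
  simp only [dil, Rot, mul_one, mul_zero, zero_mul, sub_zero, add_zero, Complex.norm_mul_cos_arg,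
    Complex.norm_mul_sin_arg]
  rfl

lemma IsCone.eq_univ_of_zero_mem {C : Set H} (hopen : IsOpen C) (hC : IsCone C) (h0 : 0 ∈ C) :
    C = univ := by
  refine eq_univ_of_forall fun q => ?_
  have hcont : ContinuousAt (fun l : ℝ => dil l q) 0 := by
    unfold dil; fun_prop
  have hdil0 : dil 0 q = 0 := by simp [dil]
  have hnear : ∀ᶠ l in 𝓝[>] (0 : ℝ), dil l q ∈ C :=
    nhdsWithin_le_nhds (hcont.eventually_mem (hdil0 ▸ hopen.mem_nhds h0))
  obtain ⟨l, hlC, hl⟩ := (hnear.and self_mem_nhdsWithin).exists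
  exact (isCone_iff.1 hC l hl q).1 hlC

lemma exists_Rot_mem_of_horizontal_mem {C : Set H} (hopen : IsOpen C) (hC : IsCone C) {p : H}
    (hpC : p ∈ C) (hp : p.2.2 = 0) : ∃ θ : ℝ, Rot θ (1, 0, 0) ∈ C := by
  obtain ⟨θ, r, hr, rfl⟩ := exists_Rot_dil_eq p hp
  rcases hr.eq_or_lt with rfl | hr
  · have h0 : (0 : H) ∈ C := by
      simp only [dil, Rot, zero_mul, mul_zero, sub_zero, add_zero, ne_eq, OfNat.ofNat_ne_zero,
        not_false_eq_true, zero_pow] at hpC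
      exact hpC
    exact ⟨θ, by simp [hC.eq_univ_of_zero_mem hopen h0]⟩
  · rw [Rot_dil, isCone_iff.1 hC r hr] at hpC
    exact ⟨θ, hpC⟩

lemma fst_ne_zero_of_mem_fullC {α : ℝ} {q : H} (hq : q ∈ fullC α) : q.1 ≠ 0 := by
  intro h
  have := hq.1
  rw [h, abs_zero, mul_zero] at this
  exact (abs_nonneg _).not_gt this

lemma neg_mem_fullC {α : ℝ} {q : H} (hq : q ∈ fullC α) : -q ∈ fullC α := by
  simpa only [fullC, mem_ofPred_eq, Prod.fst_neg, Prod.snd_neg, abs_neg, neg_sq] using hq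

lemma dil_inv_fst_mem_ball {ε : ℝ} {q : H} (hq : q ∈ fullC ε) (hx : 0 < q.1) :
    dil q.1⁻¹ q ∈ Metric.ball ((1 : ℝ), (0 : ℝ), (0 : ℝ)) ε := by
  obtain ⟨hy, hz⟩ := hq
  have hε : 0 < ε := by
    by_contra! h
    nlinarith [abs_nonneg q.2.1, abs_nonneg q.1]
  have hy' : |q.1⁻¹ * q.2.1| < ε := by
    rw [abs_mul, abs_inv, inv_mul_lt_iff₀ (abs_pos.2 hx.ne')]
    linarith
  have hz' : |(q.1⁻¹) ^ 2 * q.2.2| < ε := by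
    rw [abs_mul, abs_pow, abs_inv, inv_pow, inv_mul_lt_iff₀ (by positivity), sq_abs]
    nlinarith [sq_nonneg q.1]
  simp only [Metric.mem_ball, dil, Prod.dist_eq, Real.dist_eq, inv_mul_cancel₀ hx.ne', sub_self,
    abs_zero, sub_zero]
  exact max_lt hε (max_lt hy' hz')

lemma exists_fullC_subset {D : Set H} (hopen : IsOpen D) (hD : IsCone D)
    (hsym : ∀ p : H, p ∈ D ↔ -p ∈ D) (h1 : ((1 : ℝ), (0 : ℝ), (0 : ℝ)) ∈ D) :
    ∃ α > 0, fullC α ⊆ D := by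
  obtain ⟨ε, hε, hball⟩ := Metric.isOpen_iff.mp hopen _ h1
  have hpos : ∀ q ∈ fullC ε, 0 < q.1 → q ∈ D := fun q hq hx =>
    (isCone_iff.1 hD q.1⁻¹ (inv_pos.2 hx) q).1 (hball (dil_inv_fst_mem_ball hq hx))
  refine ⟨ε, hε, fun q hq => ?_⟩
  rcases (fst_ne_zero_of_mem_fullC hq).lt_or_gt with hx | hx
  · exact (hsym q).2 (hpos (-q) (neg_mem_fullC hq) (neg_pos.2 hx))
  · exact hpos q hq hx

theorem stmt10 (C : Set H) (hopen : IsOpen C) (hcone : IsCone C)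
    (hsym : ∀ p : H, p ∈ C ↔ -p ∈ C)
    (hz : (C ∩ {p : H | p.2.2 = 0}).Nonempty) :
    ∃ α > 0, ∃ θ : ℝ, fullC α ⊆ Rot θ '' C := by
  obtain ⟨p, hpC, hp⟩ := hz
  obtain ⟨θ, hθ⟩ := exists_Rot_mem_of_horizontal_mem hopen hcone hpC hp
  have hsymθ : ∀ q : H, q ∈ Rot θ ⁻¹' C ↔ -q ∈ Rot θ ⁻¹' C := fun q => by
    simp only [mem_preimage, Rot_neg, ← hsym]
  obtain ⟨α, hα, hsub⟩ := exists_fullC_subset (hopen.preimage (continuous_Rot θ))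
    (hcone.preimage_Rot θ) hsymθ hθ
  refine ⟨α, hα, -θ, fun q hq => mem_image_Rot_iff.2 ?_⟩
  rw [neg_neg]
  exact hsub hq
end
end

section
/- For every α > 0, the set G := {(x, 0, x³) : x ∈ [0,1]} ⊆ ℍ has the α-flat cone property, i.e. fC(α) ∩ p⁻¹G = ∅ for all p ∈ G. -/
open Set

noncomputable section

theorem stmt13 (α : ℝ) (hα : 0 < α) :
    FlatConeProp α {q : H | ∃ x ∈ Icc (0:ℝ) 1, q = (x, 0, x ^ 3)} := by
  rintro p ⟨a, ha, rfl⟩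
  ext w
  simp only [mem_inter_iff, mem_empty_iff_false, iff_false, not_and]
  rintro ⟨hy, hz⟩ ⟨q, ⟨b, hb, rfl⟩, rfl⟩
  simp only [Hmul, Hinv] at hy hz
  have hb3 : b ^ 3 = a ^ 3 := by linarith
  have hba : b = a := by
    have h := Odd.strictMono_pow (R := ℝ) (by decide : Odd 3)
    exact h.injective hb3
  subst hba
  simp at hy
end
end

section
/- The set G := {(x, 0, x³) : x ∈ [0,1]} ⊆ ℍ fails the full cone property at 0 in the direction of the x-axis: for every α > 0 there exists x ∈ (0, 1] such that (x, 0, x³) ∈ C(α); in particular C(α) ∩ 0⁻¹G ≠ ∅ for every α > 0. -/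
open Set

noncomputable section

theorem stmt14 (α : ℝ) (hα : 0 < α) :
    (∃ x ∈ Ioc (0:ℝ) 1, ((x, (0:ℝ), x ^ 3) : H) ∈ fullC α) ∧
      (fullC α ∩ LTrans (Hinv ((0:ℝ), (0:ℝ), (0:ℝ)))
        {q : H | ∃ x ∈ Icc (0:ℝ) 1, q = (x, 0, x ^ 3)}).Nonempty := by

  set x : ℝ := min 1 (α/4) with hx
  have hx0 : 0 < x := lt_min one_pos (by linarith)
  have hx1 : x ≤ 1 := min_le_left _ _
  have hxa : x ≤ α/4 := min_le_right _ _
  have hmem : ((x, (0:ℝ), x ^ 3) : H) ∈ fullC α := by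
    constructor
    · simp [abs_of_pos hx0]
      positivity
    · have : |x ^ 3| = x ^ 3 := abs_of_pos (by positivity)
      rw [this]
      have : x ^ 3 = x * x ^ 2 := by ring
      rw [this]
      have hx2 : (0:ℝ) < x ^ 2 := by positivity
      nlinarith
  refine ⟨⟨x, ⟨hx0, hx1⟩, hmem⟩, ⟨(x, 0, x ^ 3), hmem, ?_⟩⟩
  exact ⟨(x, 0, x ^ 3), ⟨x, ⟨le_of_lt hx0, hx1⟩, rfl⟩, by simp [Hmul, Hinv]⟩
end
end

section
/- The set E := {(0,0,0)} ∪ ({(x,y,z) : x = 1} \ {(1, s, 0) : |s| < 1}) ⊆ ℍ has the 1-flat cone property, i.e. fC(1) ∩ p⁻¹E = ∅ for all p ∈ E. -/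
open Set

noncomputable section

theorem stmt15 :
    FlatConeProp 1
      ({((0:ℝ), (0:ℝ), (0:ℝ))} ∪
        ({p : H | p.1 = 1} \ {q : H | ∃ s : ℝ, |s| < 1 ∧ q = (1, s, 0)})) := by
  intro p hp
  rw [Set.eq_empty_iff_forall_notMem]
  rintro q ⟨hq, e, he, rfl⟩
  obtain ⟨a, b, c⟩ := p
  obtain ⟨x, y, z⟩ := e
  simp only [fC, Hinv, Hmul, Set.mem_setOf_eq] at hq
  obtain ⟨hq1, hq2⟩ := hq
  rcases hp with hp | ⟨hp1, hp2⟩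
  · simp only [Set.mem_singleton_iff, Prod.mk.injEq] at hp
    obtain ⟨rfl, rfl, rfl⟩ := hp
    rcases he with he | ⟨he1, he2⟩
    · simp only [Set.mem_singleton_iff, Prod.mk.injEq] at he
      obtain ⟨rfl, rfl, rfl⟩ := he
      simp at hq1
    · simp only [Set.mem_setOf_eq] at he1
      subst he1
      apply he2
      refine ⟨y, by simpa using hq1, ?_⟩
      have hz : z = 0 := by nlinarith [hq2]
      simp [hz]
  · simp only [Set.mem_setOf_eq] at hp1
    subst hp1
    rcases he with he | ⟨he1, he2⟩
    · simp only [Set.mem_singleton_iff, Prod.mk.injEq] at he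
      obtain ⟨rfl, rfl, rfl⟩ := he
      apply hp2
      have hc : c = 0 := by nlinarith [hq2]
      exact ⟨b, by simpa using hq1, by simp [hc]⟩
    · simp only [Set.mem_setOf_eq] at he1
      subst he1
      simp only [sub_self, abs_zero, one_mul] at hq1
      exact absurd hq1 (by simp)
end
end

section
/- The set E := {(0,0,0)} ∪ ({(x,y,z) : x = 1} \ {(1, s, 0) : |s| < 1}) ⊆ ℍ does not have the full cone property: for every open cone C with −C = C and C ∩ {(x,y,z) : z = 0} ≠ ∅, there exists p ∈ E with C ∩ p⁻¹E ≠ ∅. -/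
open Set

noncomputable section

/-! Since `E` contains the identity, `0⁻¹E = E` and it suffices to find a point of `C` in `E`.
The open set `C` contains a point off the planes `x = 0` and `z = 0`; by symmetry its
`x`-coordinate may be taken positive, and dilating it to `x = 1` gives a point of the plane
`x = 1` with `z ≠ 0`, hence outside the removed slit. -/

def slitPlaneWithOrigin : Set H :=
  {((0:ℝ), (0:ℝ), (0:ℝ))} ∪ ({q : H | q.1 = 1} \ {q : H | ∃ s : ℝ, |s| < 1 ∧ q = (1, s, 0)})

lemma LTrans_Hinv_zero (E : Set H) : LTrans (Hinv 0) E = E := by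
  have : Hmul (Hinv 0) = id := by
    funext q
    simp [Hinv, Hmul]
  simp [LTrans, this]

lemma IsCone.dil_mem {C : Set H} (hC : IsCone C) {l : ℝ} (hl : 0 < l) {p : H} (hp : p ∈ C) :
    dil l p ∈ C :=
  hC l hl ▸ mem_image_of_mem _ hp

lemma dense_fst_ne_zero_and_snd_snd_ne_zero : Dense {p : H | p.1 ≠ 0 ∧ p.2.2 ≠ 0} := by
  have h := (dense_compl_singleton (0 : ℝ)).prod
    ((dense_univ (X := ℝ)).prod (dense_compl_singleton (0 : ℝ)))
  convert h using 1
  ext p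
  simp

lemma IsOpen.exists_fst_pos_and_snd_snd_ne_zero {C : Set H} (hopen : IsOpen C)
    (hsym : ∀ p : H, p ∈ C ↔ -p ∈ C) (hne : C.Nonempty) :
    ∃ p ∈ C, 0 < p.1 ∧ p.2.2 ≠ 0 := by
  obtain ⟨p, hpC, hx, hz⟩ := dense_fst_ne_zero_and_snd_snd_ne_zero.inter_open_nonempty C hopen hne
  rcases hx.lt_or_gt with hneg | hpos
  · exact ⟨-p, (hsym p).mp hpC, neg_pos.mpr hneg, neg_ne_zero.mpr hz⟩
  · exact ⟨p, hpC, hpos, hz⟩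

lemma mem_slitPlaneWithOrigin_of_fst_eq_one {q : H} (hx : q.1 = 1) (hz : q.2.2 ≠ 0) :
    q ∈ slitPlaneWithOrigin := by
  refine Or.inr ⟨hx, ?_⟩
  rintro ⟨s, -, rfl⟩
  exact hz rfl

lemma IsCone.exists_mem_slitPlaneWithOrigin {C : Set H} (hC : IsCone C) (hopen : IsOpen C)
    (hsym : ∀ p : H, p ∈ C ↔ -p ∈ C) (hne : C.Nonempty) :
    (C ∩ slitPlaneWithOrigin).Nonempty := by
  obtain ⟨p, hpC, hx, hz⟩ := hopen.exists_fst_pos_and_snd_snd_ne_zero hsym hne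
  refine ⟨dil p.1⁻¹ p, hC.dil_mem (inv_pos.mpr hx) hpC,
    mem_slitPlaneWithOrigin_of_fst_eq_one (inv_mul_cancel₀ hx.ne') ?_⟩
  exact mul_ne_zero (pow_ne_zero 2 (inv_ne_zero hx.ne')) hz

theorem stmt16 :
    ∀ C : Set H, IsOpen C → IsCone C → (∀ p : H, p ∈ C ↔ -p ∈ C) →
      (C ∩ {p : H | p.2.2 = 0}).Nonempty →
      ∃ p ∈ ({((0:ℝ), (0:ℝ), (0:ℝ))} ∪
          ({q : H | q.1 = 1} \ {q : H | ∃ s : ℝ, |s| < 1 ∧ q = (1, s, 0)})),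
        (C ∩ LTrans (Hinv p)
          ({((0:ℝ), (0:ℝ), (0:ℝ))} ∪
            ({q : H | q.1 = 1} \ {q : H | ∃ s : ℝ, |s| < 1 ∧ q = (1, s, 0)}))).Nonempty := by
  intro C hopen hcone hsym hflat
  refine ⟨0, Or.inl rfl, ?_⟩
  rw [LTrans_Hinv_zero]
  exact hcone.exists_mem_slitPlaneWithOrigin hopen hsym (hflat.mono inter_subset_left)
end
end
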